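/- arXiv:2205.08490 — 5 statements merged into one kernel-verified Lean document; each statement's English description precedes it below -/
import Mathlib

section
/- Let D be a domain in ℂ and let h be a non-constant meromorphic function on D such that {h, z} is holomorphic on D. Then h′ is non-vanishing at every point of D at which h is holomorphic. -/
noncomputable section

open Complex

/-- The Schwarzian derivative `{h, z} = (h''/h')' - (1/2) (h''/h')²`. -/
def schwarzian (h : ℂ → ℂ) (z : ℂ) : ℂ :=
  deriv (fun w => deriv (deriv h) w / deriv h w) z -
    (1 / 2) * (deriv (deriv h) z / deriv h z) ^ 2

/-- `h` is non-constant on `D` (i.e. not constant on its regular points in `D`). -/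
def NonconstOn (h : ℂ → ℂ) (D : Set ℂ) : Prop :=
  ¬ ∃ c : ℂ, ∀ z ∈ D, AnalyticAt ℂ h z → h z = c

/-!
If `h` is holomorphic at `z₀` and `h'(z₀) = 0`, either `h'` vanishes identically near `z₀` or it
has a zero of finite order `m ≥ 1`. In the first case `h` is locally constant, so by the identity
principle for meromorphic functions it is constant on the connected domain. In the second case
`h''/h' = m/(z - z₀) + (holomorphic)`, so `(z - z₀)² {h, z} → -m - m²/2 ≠ 0`: the Schwarzian has a
genuine double pole at `z₀` and cannot agree with a holomorphic function near it.
-/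

open Filter Topology

theorem logDeriv_sub_pow_mul {𝕜 : Type*} [NontriviallyNormedField 𝕜] {u : 𝕜 → 𝕜} {z₀ z : 𝕜}
    (m : ℕ) (hz : z ≠ z₀) (hu : DifferentiableAt 𝕜 u z) (hu0 : u z ≠ 0) :
    logDeriv (fun w => (w - z₀) ^ m * u w) z = m * (z - z₀)⁻¹ + logDeriv u z := by
  rw [logDeriv_mul (f := fun w => (w - z₀) ^ m) z (pow_ne_zero m (sub_ne_zero.mpr hz)) hu0
    (by fun_prop) hu, logDeriv_fun_pow (by fun_prop), logDeriv_apply, deriv_sub_const,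
    deriv_id'', one_div]

theorem eventually_eq_of_deriv_eventuallyEq_zero {𝕜 E : Type*} [RCLike 𝕜] [NormedAddCommGroup E]
    [NormedSpace 𝕜 E] {f : 𝕜 → E} {x : 𝕜}
    (hf : ∀ᶠ y in 𝓝 x, DifferentiableAt 𝕜 f y) (hf' : deriv f =ᶠ[𝓝 x] 0) :
    ∀ᶠ y in 𝓝 x, f y = f x := by
  obtain ⟨ε, hε, hball⟩ := Metric.eventually_nhds_iff_ball.mp (hf.and hf')
  filter_upwards [Metric.ball_mem_nhds x hε] with y hy
  exact Metric.isOpen_ball.is_const_of_deriv_eq_zero (convex_ball x ε).isPreconnected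
    (fun w hw => (hball w hw).1.differentiableWithinAt) (fun w hw => (hball w hw).2) hy
    (Metric.mem_ball_self hε)

theorem MeromorphicOn.eq_of_eventually_eq_const {𝕜 E : Type*} [NontriviallyNormedField 𝕜]
    [NormedAddCommGroup E] [NormedSpace 𝕜 E] {f : 𝕜 → E} {U : Set 𝕜} {x y : 𝕜} {c : E}
    (hf : MeromorphicOn f U) (hU : IsPreconnected U) (hx : x ∈ U) (hy : y ∈ U)
    (hfx : ∀ᶠ z in 𝓝[≠] x, f z = c) (hfy : ContinuousAt f y) : f y = c := by
  have hg : MeromorphicOn (fun z => f z - c) U := hf.sub (MeromorphicOn.const c)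
  have htop : meromorphicOrderAt (fun z => f z - c) y = ⊤ := by
    by_contra hne
    refine hg.meromorphicOrderAt_ne_top_of_isPreconnected hU hy hx hne ?_
    rw [meromorphicOrderAt_eq_top_iff]
    exact hfx.mono fun z hz => sub_eq_zero.mpr hz
  have hfy' : ∀ᶠ z in 𝓝[≠] y, f z = c :=
    (meromorphicOrderAt_eq_top_iff.mp htop).mono fun z hz => sub_eq_zero.mp hz
  exact tendsto_nhds_unique (hfy.tendsto.mono_left nhdsWithin_le_nhds)
    (tendsto_const_nhds.congr' (hfy'.mono fun z hz => hz.symm))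

theorem schwarzian_eq_logDeriv (h : ℂ → ℂ) (z : ℂ) :
    schwarzian h z = deriv (logDeriv (deriv h)) z - 1 / 2 * logDeriv (deriv h) z ^ 2 := rfl

theorem sq_mul_schwarzian_eventuallyEq {h u : ℂ → ℂ} {z₀ : ℂ} {m : ℕ} (hu : AnalyticAt ℂ u z₀)
    (hu0 : u z₀ ≠ 0) (hh : deriv h =ᶠ[𝓝 z₀] fun z => (z - z₀) ^ m * u z) :
    (fun z => (z - z₀) ^ 2 * schwarzian h z) =ᶠ[𝓝[≠] z₀]
      fun z => -m + (z - z₀) ^ 2 * deriv (logDeriv u) z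
        - 1 / 2 * (m + (z - z₀) * logDeriv u z) ^ 2 := by
  have hL : logDeriv (deriv h) =ᶠ[𝓝[≠] z₀] fun z => m * (z - z₀)⁻¹ + logDeriv u z := by
    filter_upwards [logDeriv_congr_nhdsNE (hh.filter_mono nhdsWithin_le_nhds),
      self_mem_nhdsWithin, hu.eventually_analyticAt.filter_mono nhdsWithin_le_nhds,
      (hu.continuousAt.eventually_ne hu0).filter_mono nhdsWithin_le_nhds] with z hz hne hdu huz
    rw [hz, logDeriv_sub_pow_mul m hne hdu.differentiableAt huz]
  have hdL : deriv (logDeriv (deriv h)) =ᶠ[𝓝[≠] z₀]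
      fun z => -m * ((z - z₀) ^ 2)⁻¹ + deriv (logDeriv u) z := by
    filter_upwards [hL.nhdsNE_deriv, self_mem_nhdsWithin,
      hu.eventually_analyticAt.filter_mono nhdsWithin_le_nhds,
      (hu.continuousAt.eventually_ne hu0).filter_mono nhdsWithin_le_nhds] with z hz hne hdu huz
    have hsub : z - z₀ ≠ 0 := sub_ne_zero.mpr hne
    have hq : DifferentiableAt ℂ (logDeriv u) z :=
      (hdu.deriv.div hdu huz).differentiableAt
    rw [hz]
    exact (((((hasDerivAt_id' z).sub_const z₀).inv hsub).const_mul (m : ℂ)).add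
      hq.hasDerivAt).deriv.trans (by ring)
  filter_upwards [hL, hdL, self_mem_nhdsWithin] with z hz hdz hne
  have hsub : z - z₀ ≠ 0 := sub_ne_zero.mpr hne
  rw [schwarzian_eq_logDeriv, hz, hdz]
  field_simp

theorem tendsto_sq_mul_schwarzian {h u : ℂ → ℂ} {z₀ : ℂ} {m : ℕ} (hu : AnalyticAt ℂ u z₀)
    (hu0 : u z₀ ≠ 0) (hh : deriv h =ᶠ[𝓝 z₀] fun z => (z - z₀) ^ m * u z) :
    Tendsto (fun z => (z - z₀) ^ 2 * schwarzian h z) (𝓝[≠] z₀) (𝓝 (-m - 1 / 2 * m ^ 2)) := by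
  have hq : AnalyticAt ℂ (logDeriv u) z₀ := hu.deriv.div hu hu0
  have hc : ContinuousAt (fun z => -m + (z - z₀) ^ 2 * deriv (logDeriv u) z
      - 1 / 2 * (m + (z - z₀) * logDeriv u z) ^ 2) z₀ := by
    have hq_cont := hq.continuousAt
    have hq_deriv_cont := hq.deriv.continuousAt
    fun_prop
  refine Tendsto.congr' (sq_mul_schwarzian_eventuallyEq hu hu0 hh).symm ?_
  simpa using hc.tendsto.mono_left nhdsWithin_le_nhds

theorem deriv_ne_zero_of_analyticOrderAt_ne_top {h g : ℂ → ℂ} {z₀ : ℂ}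
    (hh : AnalyticAt ℂ h z₀) (hord : analyticOrderAt (deriv h) z₀ ≠ ⊤) (hg : ContinuousAt g z₀)
    (hgs : ∀ᶠ z in 𝓝[≠] z₀, deriv h z ≠ 0 → g z = schwarzian h z) : deriv h z₀ ≠ 0 := by
  obtain ⟨m, hm⟩ := ENat.ne_top_iff_exists.mp hord
  obtain ⟨u, hu, hu0, hfac⟩ := hh.deriv.analyticOrderAt_eq_natCast.mp hm.symm
  have hne : ∀ᶠ z in 𝓝[≠] z₀, deriv h z ≠ 0 :=
    hh.deriv.eventually_eq_zero_or_eventually_ne_zero.resolve_left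
      (by rwa [← analyticOrderAt_eq_top])
  have hlim_zero : Tendsto (fun z => (z - z₀) ^ 2 * g z) (𝓝[≠] z₀) (𝓝 0) := by
    have hc : ContinuousAt (fun z => (z - z₀) ^ 2 * g z) z₀ := by fun_prop
    simpa using hc.tendsto.mono_left nhdsWithin_le_nhds
  have hlim : Tendsto (fun z => (z - z₀) ^ 2 * g z) (𝓝[≠] z₀) (𝓝 (-m - 1 / 2 * m ^ 2)) :=
    (tendsto_sq_mul_schwarzian hu hu0 hfac).congr' <| by
      filter_upwards [hgs, hne] with z hgz hz
      rw [hgz hz]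
  have hm0 : m = 0 := by
    have h0 : ((m * (m + 2) : ℕ) : ℂ) = 0 := by
      push_cast
      linear_combination 2 * tendsto_nhds_unique hlim_zero hlim
    exact (mul_eq_zero.mp (Nat.cast_eq_zero.mp h0)).resolve_right (by omega)
  rw [hfac.self_of_nhds, hm0]
  simpa using hu0

/-- Let `D` be a domain in `ℂ` and `h` a non-constant meromorphic
function on `D` such that `{h, z}` is holomorphic on `D`. Then `h'` is non-vanishing at
every point of `D` at which `h` is holomorphic. -/
theorem deriv_ne_zero_of_schwarzian_holomorphic
    (D : Set ℂ) (hD : IsOpen D) (hDconn : IsConnected D)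
    (h g : ℂ → ℂ) (hmer : MeromorphicOn h D) (hnc : NonconstOn h D)
    (hg : AnalyticOnNhd ℂ g D)
    (hgs : ∀ z ∈ D, AnalyticAt ℂ h z → deriv h z ≠ 0 → g z = schwarzian h z) :
    ∀ z ∈ D, AnalyticAt ℂ h z → deriv h z ≠ 0 := by
  intro z₀ hz₀ hh
  by_cases hord : analyticOrderAt (deriv h) z₀ = ⊤
  · have hloc : ∀ᶠ z in 𝓝 z₀, h z = h z₀ :=
      eventually_eq_of_deriv_eventuallyEq_zero
        (hh.eventually_analyticAt.mono fun z hz => hz.differentiableAt)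
        (analyticOrderAt_eq_top.mp hord)
    exact absurd ⟨h z₀, fun z hz hhz => hmer.eq_of_eventually_eq_const hDconn.isPreconnected
      hz₀ hz (hloc.filter_mono nhdsWithin_le_nhds) hhz.continuousAt⟩ hnc
  · refine deriv_ne_zero_of_analyticOrderAt_ne_top hh hord (hg z₀ hz₀).continuousAt ?_
    filter_upwards [nhdsWithin_le_nhds (hD.mem_nhds hz₀),
      hh.eventually_analyticAt.filter_mono nhdsWithin_le_nhds] with z hz hhz using hgs z hz hhz
end
end

section
/- Let D be a domain in ℂ and let h be a non-constant meromorphic function on D such that {h, z} is holomorphic on D. Then every point of D is either a regular point of h or a simple pole of h; that is, h has no pole of order ≥ 2 in D. -/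
/-!
If `h` had a pole of order `p ≥ 2` at `z₀`, then `h'` would have order `n = -p - 1 ≤ -3`
there, so `h''/h' = n/(z - z₀) + (holomorphic)`. The `(z - z₀)⁻²` coefficient of
`{h, z} = (h''/h')' - (h''/h')²/2` is then `-n - n²/2 = -n(n + 2)/2 ≠ 0`, so the Schwarzian has
a double pole at `z₀` and cannot agree with a holomorphic function off `z₀`.
-/

noncomputable section

open Complex Filter Topology

section LocalForm

variable {z₀ : ℂ}

theorem deriv_eventuallyEq_zpow_mul {F u : ℂ → ℂ} {k : ℤ} (hu : AnalyticAt ℂ u z₀)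
    (hF : F =ᶠ[𝓝[≠] z₀] fun w => (w - z₀) ^ k * u w) :
    deriv F =ᶠ[𝓝[≠] z₀] fun w => (w - z₀) ^ (k - 1) * (k * u w + (w - z₀) * deriv u w) := by
  filter_upwards [hF.nhdsNE_deriv, self_mem_nhdsWithin,
    hu.eventually_analyticAt.filter_mono nhdsWithin_le_nhds] with w hFw hw huw
  have hne : w - z₀ ≠ 0 := sub_ne_zero.mpr hw
  have hpow : HasDerivAt (fun v => (v - z₀) ^ k) (k * (w - z₀) ^ (k - 1)) w := by
    simpa using (hasDerivAt_zpow k (w - z₀) (Or.inl hne)).comp_sub_const w z₀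
  rw [hFw, (hpow.fun_mul huw.differentiableAt.hasDerivAt).deriv,
    show (w - z₀) ^ k = (w - z₀) ^ (k - 1) * (w - z₀) by rw [← zpow_add_one₀ hne, sub_add_cancel]]
  ring

theorem schwarzian_eventuallyEq_zpow_neg_two_mul {h u : ℂ → ℂ} {n : ℤ}
    (hu : AnalyticAt ℂ u z₀) (hu0 : u z₀ ≠ 0)
    (hh : deriv h =ᶠ[𝓝[≠] z₀] fun w => (w - z₀) ^ n * u w) :
    ∃ G : ℂ → ℂ, AnalyticAt ℂ G z₀ ∧ G z₀ = -(n * (n + 2) / 2) ∧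
      schwarzian h =ᶠ[𝓝[≠] z₀] fun w => (w - z₀) ^ (-2 : ℤ) * G w := by
  set q : ℂ → ℂ := fun w => (n * u w + (w - z₀) * deriv u w) / u w
  have hq : AnalyticAt ℂ q z₀ := by fun_prop (disch := exact hu0)
  have hlog : (fun w => deriv (deriv h) w / deriv h w) =ᶠ[𝓝[≠] z₀]
      fun w => (w - z₀) ^ (-1 : ℤ) * q w := by
    filter_upwards [deriv_eventuallyEq_zpow_mul hu hh, hh, self_mem_nhdsWithin,
      (hu.continuousAt.eventually_ne hu0).filter_mono nhdsWithin_le_nhds] with w h2 h1 hw huw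
    have hne : w - z₀ ≠ 0 := sub_ne_zero.mpr hw
    rw [h2, h1, zpow_sub_one₀ hne]
    simp only [q]
    field_simp
  refine ⟨fun w => (w - z₀) * deriv q w - q w - q w ^ 2 / 2, by fun_prop, ?_, ?_⟩
  · simp only [q, sub_self, zero_mul, zero_sub, add_zero, mul_div_cancel_right₀ _ hu0]
    ring
  · filter_upwards [deriv_eventuallyEq_zpow_mul hq hlog, hlog, self_mem_nhdsWithin]
      with w h1 h2 hw
    have hne : w - z₀ ≠ 0 := sub_ne_zero.mpr hw
    rw [schwarzian, h1, h2]
    simp only [zpow_neg, zpow_one]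
    push_cast
    field_simp
    ring

theorem meromorphicOrderAt_schwarzian_eq_neg_two {h : ℂ → ℂ} {n : ℤ}
    (hn : meromorphicOrderAt (deriv h) z₀ = n) (hn0 : n ≠ 0) (hn2 : n ≠ -2) :
    meromorphicOrderAt (schwarzian h) z₀ = (-2 : ℤ) := by
  have hmer : MeromorphicAt (deriv h) z₀ :=
    meromorphicAt_of_meromorphicOrderAt_ne_zero (by simpa [hn] using hn0)
  obtain ⟨u, hu, hu0, hhu⟩ := (meromorphicOrderAt_eq_int_iff hmer).mp hn
  obtain ⟨G, hG, hG0, hS⟩ := schwarzian_eventuallyEq_zpow_neg_two_mul hu hu0 hhu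
  have hG0' : G z₀ ≠ 0 := by
    rw [hG0]
    have : (n : ℂ) * (n + 2) ≠ 0 := mul_ne_zero (by exact_mod_cast hn0)
      (by exact_mod_cast (show n + 2 ≠ 0 by omega))
    simpa using this
  rw [meromorphicOrderAt_congr hS]
  exact (meromorphicOrderAt_eq_int_iff (by fun_prop)).mpr ⟨G, hG, hG0', by simp⟩

end LocalForm

theorem no_higher_order_poles_of_schwarzian_holomorphic_general
    (D : Set ℂ) (hD : IsOpen D)
    (h g : ℂ → ℂ) (hmer : MeromorphicOn h D)
    (hg : AnalyticOnNhd ℂ g D)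
    (hgs : ∀ z ∈ D, AnalyticAt ℂ h z → deriv h z ≠ 0 → g z = schwarzian h z) :
    ∀ z : ℂ, ∀ hz : z ∈ D, (-1 : WithTop ℤ) ≤ meromorphicOrderAt h z := by
  intro z hz
  by_contra! hlt
  lift meromorphicOrderAt h z to ℤ using hlt.ne_top with m hm
  have hm1 : m < -1 := WithTop.coe_lt_coe.mp hlt
  have hderiv : meromorphicOrderAt (deriv h) z = ↑(m - 1) :=
    meromorphicOrderAt_deriv_eq_sub_one (by exact_mod_cast (show m ≠ 0 by omega)) hm.symm
  have hgS : g =ᶠ[𝓝[≠] z] schwarzian h := by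
    have hderiv_ne : ∀ᶠ w in 𝓝[≠] z, deriv h w ≠ 0 :=
      (meromorphicOrderAt_ne_top_iff_eventually_ne_zero (hmer z hz).deriv).mp (by simp [hderiv])
    filter_upwards [(hD.eventually_mem hz).filter_mono nhdsWithin_le_nhds,
      (hmer z hz).eventually_analyticAt, hderiv_ne] with w hwD hwh hw'
    exact hgs w hwD hwh hw'
  have hg_nonneg := (hg z hz).meromorphicOrderAt_nonneg
  rw [meromorphicOrderAt_congr hgS,
    meromorphicOrderAt_schwarzian_eq_neg_two hderiv (by omega) (by omega)] at hg_nonneg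
  exact absurd hg_nonneg (by decide)

/-- Let `D` be a domain in `ℂ` and `h` a non-constant meromorphic
function on `D` such that `{h, z}` is holomorphic on `D`. Then every point of `D` is a
regular point or a simple pole of `h`; that is, `h` has no pole of order `≥ 2` in `D`
(each local order of `h` is at least `-1`). -/
theorem no_higher_order_poles_of_schwarzian_holomorphic
    (D : Set ℂ) (hD : IsOpen D) (hDconn : IsConnected D)
    (h g : ℂ → ℂ) (hmer : MeromorphicOn h D) (hnc : NonconstOn h D)
    (hg : AnalyticOnNhd ℂ g D)
    (hgs : ∀ z ∈ D, AnalyticAt ℂ h z → deriv h z ≠ 0 → g z = schwarzian h z) :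
    ∀ z : ℂ, ∀ hz : z ∈ D, (-1 : WithTop ℤ) ≤ meromorphicOrderAt h z :=
  no_higher_order_poles_of_schwarzian_holomorphic_general D hD h g hmer hg hgs
end
end

section
/- Let z₀ ∈ ℂ, let n ≥ 1 be an integer, and let p be holomorphic on a neighborhood U of z₀ with p(z₀) ≠ 0. Suppose h is holomorphic on U with h′(z) = (z−z₀)ⁿ p(z). Then for all z ∈ U with z ≠ z₀ and h′(z) ≠ 0, one has {h, z} = −n(n+2)/(2(z−z₀)²) − n p′(z)/((z−z₀)p(z)) + (2p(z)p″(z) − 3p′(z)²)/(2p(z)²). In particular, {h, z} has a pole of order exactly 2 at z₀. -/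
/-!
Write `L = h''/h'` for the logarithmic derivative of `h'`, so that `{h, z} = L' - L²/2`.
If `h' = (z - z₀)ⁿ p`, then `L = n/(z - z₀) + p'/p`, and expanding `L' - L²/2` gives the
formula. Its leading term `-n(n+2)/(2(z - z₀)²)` has a nonzero coefficient for `n ≥ 1`, while
the other two terms have at most a simple pole at `z₀`, so the pole has order exactly two.
-/

noncomputable section

open Complex

open Filter Topology

section Field

variable {𝕜 : Type*} [NontriviallyNormedField 𝕜]

theorem logDeriv_sub_const_pow_mul {p : 𝕜 → 𝕜} {z₀ z : 𝕜} (n : ℕ) (hz : z ≠ z₀)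
    (hpz : p z ≠ 0) (hp : DifferentiableAt 𝕜 p z) :
    logDeriv (fun w => (w - z₀) ^ n * p w) z = n / (z - z₀) + logDeriv p z := by
  rw [logDeriv_mul (f := fun w => (w - z₀) ^ n) z (pow_ne_zero _ (sub_ne_zero.2 hz)) hpz
      (by fun_prop) hp,
    logDeriv_fun_pow (by fun_prop)]
  simp [logDeriv_apply, div_eq_mul_inv]

theorem hasDerivAt_logDeriv {p : 𝕜 → 𝕜} {z : 𝕜} (hp : DifferentiableAt 𝕜 p z)
    (hp' : DifferentiableAt 𝕜 (deriv p) z) (hpz : p z ≠ 0) :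
    HasDerivAt (logDeriv p)
      ((deriv (deriv p) z * p z - deriv p z * deriv p z) / p z ^ 2) z :=
  hp'.hasDerivAt.div hp.hasDerivAt hpz

theorem meromorphicOrderAt_eq_neg_two_of_eventuallyEq {f g k : 𝕜 → 𝕜} {x c : 𝕜} (hc : c ≠ 0)
    (hg : AnalyticAt 𝕜 g x) (hk : AnalyticAt 𝕜 k x)
    (hf : f =ᶠ[𝓝[≠] x] fun z => c / (z - x) ^ 2 + g z / (z - x) + k z) :
    MeromorphicAt f x ∧ meromorphicOrderAt f x = -2 := by
  set G : 𝕜 → 𝕜 := fun z => c + (z - x) * g z + (z - x) ^ 2 * k z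
  have hG : AnalyticAt 𝕜 G x := by fun_prop
  have hfG : f =ᶠ[𝓝[≠] x] fun z => (z - x) ^ (-2 : ℤ) • G z := by
    filter_upwards [hf, self_mem_nhdsWithin] with z hfz hz
    have hzx : z - x ≠ 0 := sub_ne_zero.2 hz
    rw [hfz, smul_eq_mul, zpow_neg, zpow_ofNat]
    field_simp
    ring
  have hm : MeromorphicAt f x :=
    (((MeromorphicAt.id x).sub (.const x x)).zpow (-2)).smul hG.meromorphicAt |>.congr hfG.symm
  refine ⟨hm, ?_⟩
  rw [show (-2 : WithTop ℤ) = ((-2 : ℤ) : WithTop ℤ) from rfl, meromorphicOrderAt_eq_int_iff hm]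
  exact ⟨G, hG, by simpa [G] using hc, hfG⟩

end Field

theorem schwarzian_eq_of_logDeriv_eventuallyEq {h L : ℂ → ℂ} {L' z : ℂ}
    (hL : logDeriv (deriv h) =ᶠ[𝓝 z] L) (hL' : HasDerivAt L L' z) :
    schwarzian h z = L' - 1 / 2 * L z ^ 2 := by
  change deriv (logDeriv (deriv h)) z - 1 / 2 * logDeriv (deriv h) z ^ 2 = _
  rw [hL.deriv_eq, hL'.deriv, hL.eq_of_nhds]

theorem logDeriv_eventuallyEq_of_eventuallyEq_sub_pow_mul {f p : ℂ → ℂ} {z₀ z : ℂ} {n : ℕ}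
    (hf : f =ᶠ[𝓝 z] fun w => (w - z₀) ^ n * p w) (hp : AnalyticAt ℂ p z) (hz : z ≠ z₀)
    (hpz : p z ≠ 0) :
    logDeriv f =ᶠ[𝓝 z] fun w => n / (w - z₀) + logDeriv p w := by
  refine (logDeriv_congr_nhds hf).trans ?_
  filter_upwards [hp.eventually_analyticAt, eventually_ne_nhds hz,
    hp.continuousAt.eventually_ne hpz] with w hpw hw hpw0
  exact logDeriv_sub_const_pow_mul n hw hpw0 hpw.differentiableAt

theorem schwarzian_eq_of_deriv_eventuallyEq_sub_pow_mul {h p : ℂ → ℂ} {z₀ z : ℂ} {n : ℕ}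
    (hder : deriv h =ᶠ[𝓝 z] fun w => (w - z₀) ^ n * p w) (hp : AnalyticAt ℂ p z)
    (hz : z ≠ z₀) (hpz : p z ≠ 0) :
    schwarzian h z =
      -((n : ℂ) * ((n : ℂ) + 2)) / (2 * (z - z₀) ^ 2)
        - (n : ℂ) * deriv p z / ((z - z₀) * p z)
        + (2 * p z * deriv (deriv p) z - 3 * (deriv p z) ^ 2) / (2 * (p z) ^ 2) := by
  have hzz₀ : z - z₀ ≠ 0 := sub_ne_zero.2 hz
  have hpole := (hasDerivAt_const z (n : ℂ)).fun_div ((hasDerivAt_id' z).sub_const z₀) hzz₀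
  rw [schwarzian_eq_of_logDeriv_eventuallyEq
    (logDeriv_eventuallyEq_of_eventuallyEq_sub_pow_mul hder hp hz hpz)
    (hpole.add (hasDerivAt_logDeriv hp.differentiableAt hp.deriv.differentiableAt hpz)),
    logDeriv_apply]
  field_simp
  ring

theorem schwarzian_formula_of_deriv_eq_zpow_smul_general
    (U : Set ℂ) (hU : IsOpen U) (z₀ : ℂ) (hz₀ : z₀ ∈ U) (n : ℕ) (hn : 1 ≤ n)
    (p h : ℂ → ℂ) (hp : AnalyticOnNhd ℂ p U) (hp0 : p z₀ ≠ 0)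
    (hder : ∀ z ∈ U, deriv h z = (z - z₀) ^ n * p z) :
    (∀ z ∈ U, z ≠ z₀ → deriv h z ≠ 0 →
      schwarzian h z =
        -((n : ℂ) * ((n : ℂ) + 2)) / (2 * (z - z₀) ^ 2)
          - (n : ℂ) * deriv p z / ((z - z₀) * p z)
          + (2 * p z * deriv (deriv p) z - 3 * (deriv p z) ^ 2) / (2 * (p z) ^ 2)) ∧
    ∃ hm : MeromorphicAt (schwarzian h) z₀, meromorphicOrderAt (schwarzian h) z₀ = -2 := by
  have hder_nhds : ∀ z ∈ U, deriv h =ᶠ[𝓝 z] fun w => (w - z₀) ^ n * p w :=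
    fun z hz => eventuallyEq_of_mem (hU.mem_nhds hz) hder
  have hformula := fun z hz hzz₀ hpz =>
    schwarzian_eq_of_deriv_eventuallyEq_sub_pow_mul (hder_nhds z hz) (hp z hz) hzz₀ hpz
  refine ⟨fun z hz hzz₀ hdz => hformula z hz hzz₀ fun hpz => hdz (by simp [hder z hz, hpz]), ?_⟩
  have hc : -((n : ℂ) * ((n : ℂ) + 2)) / 2 ≠ 0 := by
    have : (n : ℂ) * ((n : ℂ) + 2) ≠ 0 := by exact_mod_cast (Nat.mul_pos hn (by omega)).ne'
    simpa using this
  have hp₀ := hp z₀ hz₀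
  have hlaurent : schwarzian h =ᶠ[𝓝[≠] z₀] fun z =>
      -((n : ℂ) * ((n : ℂ) + 2)) / 2 / (z - z₀) ^ 2 + (-n * deriv p z / p z) / (z - z₀)
        + (2 * p z * deriv (deriv p) z - 3 * deriv p z ^ 2) / (2 * p z ^ 2) := by
    filter_upwards [nhdsWithin_le_nhds (hU.mem_nhds hz₀),
      nhdsWithin_le_nhds (hp₀.continuousAt.eventually_ne hp0), self_mem_nhdsWithin]
      with z hz hpz hzz₀
    have : z - z₀ ≠ 0 := sub_ne_zero.2 hzz₀
    rw [hformula z hz hzz₀ hpz]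
    field_simp
    ring
  obtain ⟨hm, hord⟩ := meromorphicOrderAt_eq_neg_two_of_eventuallyEq hc
    (by fun_prop (disch := assumption)) (by fun_prop (disch := simpa)) hlaurent
  exact ⟨hm, hord⟩

/-- Let `z₀ ∈ ℂ`, `n ≥ 1`, and `p` holomorphic on a neighborhood `U`
of `z₀` with `p z₀ ≠ 0`. Suppose `h` is holomorphic on `U` with `h' z = (z - z₀)^n p z`.
Then, away from `z₀` and the zeros of `h'`,
`{h, z} = -n(n+2)/(2(z-z₀)²) - n p'(z)/((z-z₀) p(z)) + (2 p p'' - 3 p'²)/(2 p²)`;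
in particular `{h, z}` has a pole of order exactly `2` at `z₀`. -/
theorem schwarzian_formula_of_deriv_eq_zpow_smul
    (U : Set ℂ) (hU : IsOpen U) (z₀ : ℂ) (hz₀ : z₀ ∈ U) (n : ℕ) (hn : 1 ≤ n)
    (p h : ℂ → ℂ) (hp : AnalyticOnNhd ℂ p U) (hp0 : p z₀ ≠ 0)
    (hh : AnalyticOnNhd ℂ h U)
    (hder : ∀ z ∈ U, deriv h z = (z - z₀) ^ n * p z) :
    (∀ z ∈ U, z ≠ z₀ → deriv h z ≠ 0 →
      schwarzian h z =
        -((n : ℂ) * ((n : ℂ) + 2)) / (2 * (z - z₀) ^ 2)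
          - (n : ℂ) * deriv p z / ((z - z₀) * p z)
          + (2 * p z * deriv (deriv p) z - 3 * (deriv p z) ^ 2) / (2 * (p z) ^ 2)) ∧
    ∃ hm : MeromorphicAt (schwarzian h) z₀, meromorphicOrderAt (schwarzian h) z₀ = -2 :=
  schwarzian_formula_of_deriv_eq_zpow_smul_general U hU z₀ hz₀ n hn p h hp hp0 hder
end
end

section
/- Let U be an open subset of ℂ, let h be holomorphic on U with h′ non-vanishing on U, and let G be a holomorphic function on U with G² = h′. Then f₁ := h/G and f₂ := 1/G are holomorphic on U and satisfy the differential equation y″ + (1/2){h, z} y = 0 on U; that is, f₁″ = −(1/2){h, z} f₁ and f₂″ = −(1/2){h, z} f₂. -/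
/-!
With `G² = h'` one has `h'' = 2 G G'`, so `h''/h' = 2 G'/G` and `{h, z} = 2 G''/G - 4 (G'/G)²`;
differentiating `1/G` twice gives exactly `-(1/2) {h, z} / G`. For `h/G = h · (1/G)` the Leibniz
rule gives `h'' (1/G) + 2 h' (1/G)' + h (1/G)''`, and the first two terms cancel:
`2 G G' / G - 2 G² G' / G² = 0`.
-/

noncomputable section

open Complex

open Filter Topology

namespace Complex

variable {f g G h : ℂ → ℂ} {z : ℂ}

theorem deriv_deriv_mul (hf : AnalyticAt ℂ f z) (hg : AnalyticAt ℂ g z) :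
    deriv (deriv fun w => f w * g w) z =
      deriv (deriv f) z * g z + 2 * deriv f z * deriv g z + f z * deriv (deriv g) z := by
  have hderiv : deriv (fun w => f w * g w) =ᶠ[𝓝 z]
      fun w => deriv f w * g w + f w * deriv g w := by
    filter_upwards [hf.eventually_analyticAt, hg.eventually_analyticAt] with w hfw hgw
    exact deriv_fun_mul hfw.differentiableAt hgw.differentiableAt
  have hf' := hf.deriv.differentiableAt
  have hg' := hg.deriv.differentiableAt
  rw [hderiv.deriv_eq, deriv_fun_add (by fun_prop) (by fun_prop),
    deriv_fun_mul hf' hg.differentiableAt, deriv_fun_mul hf.differentiableAt hg']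
  ring

theorem deriv_deriv_one_div (hG : AnalyticAt ℂ G z) (hGz : G z ≠ 0) :
    deriv (deriv fun w => 1 / G w) z =
      (2 * deriv G z ^ 2 / G z ^ 2 - deriv (deriv G) z / G z) * (1 / G z) := by
  have hderiv : deriv (fun w => 1 / G w) =ᶠ[𝓝 z] fun w => -deriv G w / G w ^ 2 := by
    filter_upwards [hG.eventually_analyticAt, hG.continuousAt.eventually_ne hGz] with w hGw hw
    rw [deriv_const_div 1 hGw.differentiableAt hw, neg_one_mul]
  have hGd := hG.differentiableAt
  have hG' := hG.deriv.differentiableAt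
  rw [hderiv.deriv_eq, deriv_fun_div (c := fun w => -deriv G w) (d := fun w => G w ^ 2)
    (by fun_prop) (by fun_prop) (pow_ne_zero 2 hGz),
    deriv.fun_neg, deriv_fun_pow hGd]
  field_simp
  ring

theorem deriv_deriv_eq_of_deriv_eventuallyEq_sq (hG : DifferentiableAt ℂ G z)
    (hsq : deriv h =ᶠ[𝓝 z] fun w => G w ^ 2) :
    deriv (deriv h) z = 2 * G z * deriv G z := by
  rw [hsq.deriv_eq, deriv_fun_pow hG]
  ring

theorem schwarzian_eq_of_deriv_eventuallyEq_sq (hG : AnalyticAt ℂ G z) (hGz : G z ≠ 0)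
    (hsq : deriv h =ᶠ[𝓝 z] fun w => G w ^ 2) :
    schwarzian h z = 2 * deriv (deriv G) z / G z - 4 * deriv G z ^ 2 / G z ^ 2 := by
  have hlog : (fun w => deriv (deriv h) w / deriv h w) =ᶠ[𝓝 z]
      fun w => 2 * deriv G w / G w := by
    filter_upwards [hsq.eventuallyEq_nhds, hsq, hG.eventually_analyticAt,
      hG.continuousAt.eventually_ne hGz] with w hsqw hw hGw hGw0
    rw [deriv_deriv_eq_of_deriv_eventuallyEq_sq hGw.differentiableAt hsqw, hw]
    field_simp
  have hG' := hG.deriv.differentiableAt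
  rw [schwarzian, hlog.deriv_eq, deriv_fun_div (hG'.const_mul 2) hG.differentiableAt hGz,
    deriv_const_mul _ hG', deriv_deriv_eq_of_deriv_eventuallyEq_sq hG.differentiableAt hsq,
    hsq.eq_of_nhds]
  field_simp
  ring

theorem deriv_deriv_one_div_of_deriv_eventuallyEq_sq (hG : AnalyticAt ℂ G z) (hGz : G z ≠ 0)
    (hsq : deriv h =ᶠ[𝓝 z] fun w => G w ^ 2) :
    deriv (deriv fun w => 1 / G w) z = -(1 / 2) * schwarzian h z * (1 / G z) := by
  rw [deriv_deriv_one_div hG hGz, schwarzian_eq_of_deriv_eventuallyEq_sq hG hGz hsq]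
  ring

theorem deriv_deriv_div_of_deriv_eventuallyEq_sq (hh : AnalyticAt ℂ h z) (hG : AnalyticAt ℂ G z)
    (hGz : G z ≠ 0) (hsq : deriv h =ᶠ[𝓝 z] fun w => G w ^ 2) :
    deriv (deriv fun w => h w / G w) z = -(1 / 2) * schwarzian h z * (h z / G z) := by
  have hinv : AnalyticAt ℂ (fun w => 1 / G w) z := analyticAt_const.div hG hGz
  simp_rw [div_eq_mul_one_div (h _) (G _)]
  rw [deriv_deriv_mul hh hinv, deriv_deriv_one_div_of_deriv_eventuallyEq_sq hG hGz hsq,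
    deriv_deriv_eq_of_deriv_eventuallyEq_sq hG.differentiableAt hsq, hsq.eq_of_nhds,
    deriv_const_div 1 hG.differentiableAt hGz]
  field_simp
  ring

end Complex

/-- Let `U ⊆ ℂ` be open, `h` holomorphic on `U` with `h'`
non-vanishing on `U`, and `G` holomorphic on `U` with `G² = h'`. Then `f₁ = h / G` and
`f₂ = 1 / G` are holomorphic on `U` and satisfy `y'' + (1/2) {h, z} y = 0` on `U`. -/
theorem ratio_solutions_of_sqrt_deriv
    (U : Set ℂ) (hU : IsOpen U) (h G : ℂ → ℂ)
    (hh : AnalyticOnNhd ℂ h U) (hder : ∀ z ∈ U, deriv h z ≠ 0)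
    (hG : AnalyticOnNhd ℂ G U) (hG2 : ∀ z ∈ U, G z ^ 2 = deriv h z) :
    AnalyticOnNhd ℂ (fun z => h z / G z) U ∧
    AnalyticOnNhd ℂ (fun z => 1 / G z) U ∧
    (∀ z ∈ U, deriv (deriv (fun w => h w / G w)) z =
      -(1 / 2) * schwarzian h z * (h z / G z)) ∧
    (∀ z ∈ U, deriv (deriv (fun w => 1 / G w)) z =
      -(1 / 2) * schwarzian h z * (1 / G z)) := by
  have hG0 : ∀ z ∈ U, G z ≠ 0 := fun z hz hGz =>
    hder z hz (by rw [← hG2 z hz, hGz, zero_pow two_ne_zero])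
  have hsq : ∀ z ∈ U, deriv h =ᶠ[𝓝 z] fun w => G w ^ 2 := fun z hz =>
    eventually_of_mem (hU.mem_nhds hz) fun w hw => (hG2 w hw).symm
  exact ⟨fun z hz => (hh z hz).div (hG z hz) (hG0 z hz),
    fun z hz => analyticAt_const.div (hG z hz) (hG0 z hz),
    fun z hz => deriv_deriv_div_of_deriv_eventuallyEq_sq (hh z hz) (hG z hz) (hG0 z hz) (hsq z hz),
    fun z hz => deriv_deriv_one_div_of_deriv_eventuallyEq_sq (hG z hz) (hG0 z hz) (hsq z hz)⟩
end
end

section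
/- Let D be a simply connected domain in ℂ, let g be holomorphic on D, and let h be a non-constant meromorphic function on D with {h, z} = g. If y₁ and y₂ are two linearly independent holomorphic solutions on D of y″ + (1/2)g y = 0, then there exists α = [[a,b],[c,d]] ∈ GL₂(ℂ) such that h = (a·(y₁/y₂) + b)/(c·(y₁/y₂) + d); in particular, setting (f₁, f₂) := (y₁, y₂)·αᵀ, one has h = f₁/f₂ with f₁, f₂ holomorphic solutions of y″ + (1/2)g y = 0. -/
/-!
Near a point `z₀` where `h` is holomorphic with `h' z₀ ≠ 0`, pick a holomorphic `v` with
`h' v² = 1`. Then `{h, z} v = -2 v''`, so `v` and `h v` solve `y'' + (g/2) y = 0` near `z₀`, with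
Wronskian `-h' v² = -1`. The Wronskian of two solutions is constant, and that of `y₁, y₂` is
nonzero by linear independence, so every solution `w` satisfies
`W(y₁, y₂) w = W(w, y₂) y₁ - W(w, y₁) y₂`. Applied to `h v` and `v` this gives
`h (c y₁ + d y₂) = a y₁ + b y₂` near `z₀` with `ad - bc = W(h v, v) W(y₁, y₂) ≠ 0`, and the
identity theorem for meromorphic functions spreads this relation over the domain `D`.
-/

noncomputable section

open Complex

open Filter Metric Set Topology

def wronskian (u v : ℂ → ℂ) (z : ℂ) : ℂ :=
  u z * deriv v z - v z * deriv u z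

lemma wronskian_mul_eq_sub (y₁ y₂ w : ℂ → ℂ) (z : ℂ) :
    wronskian y₁ y₂ z * w z = wronskian w y₂ z * y₁ z - wronskian w y₁ z * y₂ z := by
  unfold wronskian; ring

-- Cauchy–Binet for the `2 × 2` matrices with rows `(f z, f' z)`.
lemma wronskian_mul_wronskian_sub (w₁ w₂ y₁ y₂ : ℂ → ℂ) (z : ℂ) :
    wronskian w₁ y₁ z * wronskian w₂ y₂ z - wronskian w₁ y₂ z * wronskian w₂ y₁ z =
      wronskian w₁ w₂ z * wronskian y₁ y₂ z := by
  unfold wronskian; ring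

lemma wronskian_mul_left_self {h v : ℂ → ℂ} {z : ℂ} (hh : DifferentiableAt ℂ h z)
    (hv : DifferentiableAt ℂ v z) :
    wronskian (fun w => h w * v w) v z = -(deriv h z * v z ^ 2) := by
  rw [wronskian, (hh.hasDerivAt.fun_mul hv.hasDerivAt).deriv]
  ring

lemma hasDerivAt_wronskian {u v : ℂ → ℂ} {z : ℂ} (hu : AnalyticAt ℂ u z)
    (hv : AnalyticAt ℂ v z) :
    HasDerivAt (wronskian u v) (u z * deriv (deriv v) z - v z * deriv (deriv u) z) z := by
  refine ((hu.differentiableAt.hasDerivAt.fun_mul hv.deriv.differentiableAt.hasDerivAt).fun_sub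
    (hv.differentiableAt.hasDerivAt.fun_mul hu.deriv.differentiableAt.hasDerivAt)).congr_deriv ?_
  ring

lemma exists_linear_relation_of_wronskian_eq_zero {u v : ℂ → ℂ} {U : Set ℂ} (hU : IsOpen U)
    (hUc : IsPreconnected U) (hu : AnalyticOnNhd ℂ u U) (hv : AnalyticOnNhd ℂ v U)
    (hW : ∀ z ∈ U, wronskian u v z = 0) :
    ∃ a b : ℂ, (a ≠ 0 ∨ b ≠ 0) ∧ ∀ z ∈ U, a * u z + b * v z = 0 := by
  by_cases hv0 : ∀ z ∈ U, v z = 0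
  · exact ⟨0, 1, Or.inr one_ne_zero, fun z hz => by simp [hv0 z hz]⟩
  push Not at hv0
  obtain ⟨p, hp, hvp⟩ := hv0
  obtain ⟨r, hr, hball⟩ := Metric.eventually_nhds_iff_ball.mp
    ((hU.eventually_mem hp).and ((hv p hp).continuousAt.eventually_ne hvp))
  -- `(u / v)' = -W(u, v) / v²` vanishes near `p`
  have hratio : ∀ z ∈ ball p r, u z / v z = u p / v p := by
    intro z hz
    refine isOpen_ball.is_const_of_deriv_eq_zero (convex_ball p r).isPreconnected
      (fun w hw => ((hu w (hball w hw).1).differentiableAt.div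
        (hv w (hball w hw).1).differentiableAt (hball w hw).2).differentiableWithinAt)
      (fun w hw => ?_) hz (mem_ball_self hr)
    obtain ⟨hwU, hvw⟩ := hball w hw
    rw [((hu w hwU).differentiableAt.hasDerivAt.div (hv w hwU).differentiableAt.hasDerivAt
      hvw).deriv, Pi.zero_apply, div_eq_zero_iff]
    have hWw := hW w hwU
    rw [wronskian] at hWw
    left
    linear_combination -hWw
  have hzero : EqOn (fun z => u z - u p / v p * v z) 0 U :=
    (hu.sub (analyticOnNhd_const.mul hv)).eqOn_zero_of_preconnected_of_eventuallyEq_zero hUc hp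
      (by
        filter_upwards [ball_mem_nhds p hr] with w hw
        rw [← hratio w hw, Pi.sub_apply, div_mul_cancel₀ _ (hball w hw).2, sub_self,
          Pi.zero_apply])
  refine ⟨1, -(u p / v p), Or.inl one_ne_zero, fun z hz => ?_⟩
  have h0 := hzero hz
  rw [Pi.zero_apply] at h0
  linear_combination h0

def IsSolutionOn (q : ℂ → ℂ) (U : Set ℂ) (y : ℂ → ℂ) : Prop :=
  AnalyticOnNhd ℂ y U ∧ ∀ z ∈ U, deriv (deriv y) z + q z * y z = 0

namespace IsSolutionOn

variable {q u v y₁ y₂ w : ℂ → ℂ} {U : Set ℂ}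

lemma mono {V : Set ℂ} (hu : IsSolutionOn q U u) (hVU : V ⊆ U) : IsSolutionOn q V u :=
  ⟨hu.1.mono hVU, fun z hz => hu.2 z (hVU hz)⟩

lemma linearCombination (hU : IsOpen U) (hu : IsSolutionOn q U u) (hv : IsSolutionOn q U v)
    (a b : ℂ) : IsSolutionOn q U (fun z => a * u z + b * v z) := by
  refine ⟨fun z hz => (analyticAt_const.mul (hu.1 z hz)).add (analyticAt_const.mul (hv.1 z hz)),
    fun z hz => ?_⟩
  have hderiv : deriv (fun w => a * u w + b * v w) =ᶠ[𝓝 z]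
      fun w => a * deriv u w + b * deriv v w := by
    filter_upwards [hU.mem_nhds hz] with w hw
    exact (((hu.1 w hw).differentiableAt.hasDerivAt.const_mul a).fun_add
      ((hv.1 w hw).differentiableAt.hasDerivAt.const_mul b)).deriv
  rw [hderiv.deriv_eq, (((hu.1 z hz).deriv.differentiableAt.hasDerivAt.const_mul a).fun_add
    ((hv.1 z hz).deriv.differentiableAt.hasDerivAt.const_mul b)).deriv]
  linear_combination a * hu.2 z hz + b * hv.2 z hz

lemma wronskian_eq (hU : IsOpen U) (hUc : IsPreconnected U) (hu : IsSolutionOn q U u)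
    (hv : IsSolutionOn q U v) {z z' : ℂ} (hz : z ∈ U) (hz' : z' ∈ U) :
    wronskian u v z = wronskian u v z' :=
  hU.is_const_of_deriv_eq_zero hUc
    (fun x hx => (hasDerivAt_wronskian (hu.1 x hx) (hv.1 x hx)).differentiableAt
      |>.differentiableWithinAt)
    (fun x hx => by
      rw [(hasDerivAt_wronskian (hu.1 x hx) (hv.1 x hx)).deriv, Pi.zero_apply]
      linear_combination u x * hv.2 x hx - v x * hu.2 x hx) hz hz'

lemma wronskian_ne_zero (hU : IsOpen U) (hUc : IsPreconnected U) (hu : IsSolutionOn q U u)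
    (hv : IsSolutionOn q U v)
    (hind : ∀ a b : ℂ, (∀ z ∈ U, a * u z + b * v z = 0) → a = 0 ∧ b = 0) {z₀ : ℂ}
    (hz₀ : z₀ ∈ U) : wronskian u v z₀ ≠ 0 := by
  intro h0
  obtain ⟨a, b, hab, hrel⟩ := exists_linear_relation_of_wronskian_eq_zero hU hUc hu.1 hv.1
    fun z hz => (hu.wronskian_eq hU hUc hv hz hz₀).trans h0
  obtain ⟨ha, hb⟩ := hind a b hrel
  exact hab.elim (· ha) (· hb)

lemma wronskian_mul_eq (hU : IsOpen U) (hUc : IsPreconnected U) (hy₁ : IsSolutionOn q U y₁)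
    (hy₂ : IsSolutionOn q U y₂) (hw : IsSolutionOn q U w) {z₀ : ℂ} (hz₀ : z₀ ∈ U) :
    ∀ z ∈ U, wronskian y₁ y₂ z₀ * w z = wronskian w y₂ z₀ * y₁ z - wronskian w y₁ z₀ * y₂ z := by
  intro z hz
  rw [← hy₁.wronskian_eq hU hUc hy₂ hz hz₀, ← hw.wronskian_eq hU hUc hy₂ hz hz₀,
    ← hw.wronskian_eq hU hUc hy₁ hz hz₀, wronskian_mul_eq_sub]

end IsSolutionOn

lemma MeromorphicOn.eq_zero_of_eventuallyEq_zero {f : ℂ → ℂ} {U : Set ℂ}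
    (hf : MeromorphicOn f U) (hU : IsPreconnected U) {z₀ z : ℂ} (hz₀ : z₀ ∈ U)
    (h0 : f =ᶠ[𝓝 z₀] 0) (hz : z ∈ U) (hfz : ContinuousAt f z) : f z = 0 := by
  have htop : meromorphicOrderAt f z = ⊤ := by
    by_contra hne
    exact hf.meromorphicOrderAt_ne_top_of_isPreconnected hU hz hz₀ hne
      (meromorphicOrderAt_eq_top_iff.mpr (h0.filter_mono nhdsWithin_le_nhds))
  exact ((hfz.eventuallyEq_nhds_iff_eventuallyEq_nhdsNE continuousAt_const).mp
    (meromorphicOrderAt_eq_top_iff.mp htop)).eq_of_nhds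

lemma MeromorphicOn.eq_div_of_eventually_mul_eq {f u w : ℂ → ℂ} {U : Set ℂ}
    (hf : MeromorphicOn f U) (hU : IsPreconnected U) (hu : AnalyticOnNhd ℂ u U)
    (hw : AnalyticOnNhd ℂ w U) {z₀ z : ℂ} (hz₀ : z₀ ∈ U) (h0 : ∀ᶠ x in 𝓝 z₀, f x * u x = w x)
    (hz : z ∈ U) (hfz : AnalyticAt ℂ f z) (hu0 : u z ≠ 0) : f z = w z / u z := by
  rw [eq_div_iff hu0, ← sub_eq_zero]
  refine (hf.fun_mul hu.meromorphicOn).fun_sub hw.meromorphicOn |>.eq_zero_of_eventuallyEq_zero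
    hU hz₀ ?_ hz ((hfz.continuousAt.mul (hu z hz).continuousAt).sub (hw z hz).continuousAt)
  filter_upwards [h0] with x hx
  rw [hx, sub_self, Pi.zero_apply]

lemma MeromorphicOn.exists_analyticAt_deriv_ne_zero {f : ℂ → ℂ} {U : Set ℂ} (hU : IsOpen U)
    (hUc : IsPreconnected U) (hf : MeromorphicOn f U) (hnc : NonconstOn f U) :
    ∃ z ∈ U, AnalyticAt ℂ f z ∧ deriv f z ≠ 0 := by
  by_contra! hcon
  obtain ⟨p, hp⟩ : U.Nonempty := by
    by_contra hne
    exact hnc ⟨0, fun z hz => absurd ⟨z, hz⟩ hne⟩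
  obtain ⟨z₁, hz₁, hz₁U⟩ := ((hf p hp).eventually_analyticAt.and
    (eventually_nhdsWithin_of_eventually_nhds (hU.eventually_mem hp))).exists
  obtain ⟨r, hr, hball⟩ := Metric.eventually_nhds_iff_ball.mp
    (hz₁.eventually_analyticAt.and (hU.eventually_mem hz₁U))
  have hconst : ∀ z ∈ ball z₁ r, f z = f z₁ := fun z hz =>
    isOpen_ball.is_const_of_deriv_eq_zero (convex_ball z₁ r).isPreconnected
      (fun x hx => (hball x hx).1.differentiableAt.differentiableWithinAt)
      (fun x hx => hcon x (hball x hx).2 (hball x hx).1) hz (mem_ball_self hr)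
  refine hnc ⟨f z₁, fun z hz hfz => sub_eq_zero.mp ?_⟩
  refine hf.fun_sub (MeromorphicOn.const _) |>.eq_zero_of_eventuallyEq_zero hUc hz₁U ?_ hz
    (hfz.continuousAt.sub continuousAt_const)
  filter_upwards [ball_mem_nhds z₁ hr] with x hx
  rw [hconst x hx, sub_self, Pi.zero_apply]

lemma AnalyticAt.exists_eventually_mul_sq_eq_one {φ : ℂ → ℂ} {z₀ : ℂ} (hφ : AnalyticAt ℂ φ z₀)
    (h0 : φ z₀ ≠ 0) : ∃ v : ℂ → ℂ, ∀ᶠ z in 𝓝 z₀, AnalyticAt ℂ v z ∧ φ z * v z ^ 2 = 1 := by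
  -- `φ / φ z₀` stays in the slit plane near `z₀`, where `log` is holomorphic
  have hslit : ∀ᶠ z in 𝓝 z₀, φ z / φ z₀ ∈ slitPlane :=
    (hφ.continuousAt.div_const (φ z₀)).eventually_mem
      (isOpen_slitPlane.mem_nhds (by rw [div_self h0]; exact one_mem_slitPlane))
  refine ⟨fun z => Complex.exp (-(Complex.log (φ z / φ z₀) + Complex.log (φ z₀)) / 2), ?_⟩
  filter_upwards [hslit, hφ.eventually_analyticAt] with z hz hφz
  refine ⟨((((hφz.div analyticAt_const h0).clog hz).add analyticAt_const).neg.div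
    analyticAt_const two_ne_zero).cexp, ?_⟩
  rw [← Complex.exp_nat_mul, show ((2 : ℕ) : ℂ) *
      (-(Complex.log (φ z / φ z₀) + Complex.log (φ z₀)) / 2) =
    -(Complex.log (φ z / φ z₀) + Complex.log (φ z₀)) by push_cast; ring, exp_neg, exp_add,
    exp_log (slitPlane_ne_zero hz), exp_log h0, div_mul_cancel₀ _ h0,
    mul_inv_cancel₀ (div_ne_zero_iff.mp (slitPlane_ne_zero hz)).1]

section SquareRootOfDerivative

variable {h v : ℂ → ℂ} {U : Set ℂ}

lemma deriv_deriv_mul_add_two_mul_eq_zero (hU : IsOpen U) (hh : AnalyticOnNhd ℂ h U)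
    (hv : AnalyticOnNhd ℂ v U) (hhv : ∀ z ∈ U, deriv h z * v z ^ 2 = 1) :
    ∀ z ∈ U, deriv (deriv h) z * v z + 2 * deriv h z * deriv v z = 0 := by
  intro z hz
  have hvz : v z ≠ 0 := (pow_ne_zero_iff two_ne_zero).mp (right_ne_zero_of_mul_eq_one (hhv z hz))
  have hconst : (fun w => deriv h w * v w ^ 2) =ᶠ[𝓝 z] fun _ => 1 := by
    filter_upwards [hU.mem_nhds hz] using hhv
  have H := ((hh z hz).deriv.differentiableAt.hasDerivAt.fun_mul
    ((hv z hz).differentiableAt.hasDerivAt.fun_pow 2)).deriv.symm.trans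
    (hconst.deriv_eq.trans (deriv_const z 1))
  norm_num at H
  apply mul_left_cancel₀ hvz
  linear_combination H

lemma schwarzian_mul_eq_of_deriv_mul_sq_eq_one (hU : IsOpen U) (hh : AnalyticOnNhd ℂ h U)
    (hv : AnalyticOnNhd ℂ v U) (hhv : ∀ z ∈ U, deriv h z * v z ^ 2 = 1) :
    ∀ z ∈ U, schwarzian h z * v z = -2 * deriv (deriv v) z := by
  intro z hz
  have hvne : ∀ w ∈ U, v w ≠ 0 := fun w hw =>
    (pow_ne_zero_iff two_ne_zero).mp (right_ne_zero_of_mul_eq_one (hhv w hw))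
  have hratio : (fun w => deriv (deriv h) w / deriv h w) =ᶠ[𝓝 z] fun w => -2 * deriv v w / v w := by
    filter_upwards [hU.mem_nhds hz] with w hw
    rw [div_eq_div_iff (left_ne_zero_of_mul_eq_one (hhv w hw)) (hvne w hw)]
    linear_combination deriv_deriv_mul_add_two_mul_eq_zero hU hh hv hhv w hw
  have hratio_z : deriv (deriv h) z / deriv h z = -2 * deriv v z / v z := hratio.eq_of_nhds
  rw [schwarzian, hratio.deriv_eq, hratio_z, (((hv z hz).deriv.differentiableAt.hasDerivAt.const_mul
    (-2)).fun_div (hv z hz).differentiableAt.hasDerivAt (hvne z hz)).deriv]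
  have hvz := hvne z hz
  field_simp
  ring

lemma isSolutionOn_of_deriv_mul_sq_eq_one {g : ℂ → ℂ} (hU : IsOpen U) (hh : AnalyticOnNhd ℂ h U)
    (hv : AnalyticOnNhd ℂ v U) (hhv : ∀ z ∈ U, deriv h z * v z ^ 2 = 1)
    (hS : ∀ z ∈ U, schwarzian h z = g z) :
    IsSolutionOn (fun z => 1 / 2 * g z) U v ∧
      IsSolutionOn (fun z => 1 / 2 * g z) U (fun z => h z * v z) := by
  have hv_sol : IsSolutionOn (fun z => 1 / 2 * g z) U v := ⟨hv, fun z hz => by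
    show deriv (deriv v) z + 1 / 2 * g z * v z = 0
    rw [← hS z hz]
    linear_combination 1 / 2 * schwarzian_mul_eq_of_deriv_mul_sq_eq_one hU hh hv hhv z hz⟩
  refine ⟨hv_sol, fun z hz => (hh z hz).mul (hv z hz), fun z hz => ?_⟩
  have hderiv : deriv (fun w => h w * v w) =ᶠ[𝓝 z] fun w => deriv h w * v w + h w * deriv v w := by
    filter_upwards [hU.mem_nhds hz] with w hw
    exact ((hh w hw).differentiableAt.hasDerivAt.fun_mul
      (hv w hw).differentiableAt.hasDerivAt).deriv
  rw [hderiv.deriv_eq, (((hh z hz).deriv.differentiableAt.hasDerivAt.fun_mul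
    (hv z hz).differentiableAt.hasDerivAt).fun_add ((hh z hz).differentiableAt.hasDerivAt.fun_mul
    (hv z hz).deriv.differentiableAt.hasDerivAt)).deriv]
  linear_combination deriv_deriv_mul_add_two_mul_eq_zero hU hh hv hhv z hz + h z * hv_sol.2 z hz

lemma exists_mul_eq_of_deriv_mul_sq_eq_one {g y₁ y₂ : ℂ → ℂ} {z₀ : ℂ} (hU : IsOpen U)
    (hUc : IsPreconnected U) (hz₀ : z₀ ∈ U) (hh : AnalyticOnNhd ℂ h U)
    (hv : AnalyticOnNhd ℂ v U) (hhv : ∀ z ∈ U, deriv h z * v z ^ 2 = 1)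
    (hS : ∀ z ∈ U, schwarzian h z = g z) (hy₁ : IsSolutionOn (fun z => 1 / 2 * g z) U y₁)
    (hy₂ : IsSolutionOn (fun z => 1 / 2 * g z) U y₂) (hW : wronskian y₁ y₂ z₀ ≠ 0) :
    ∃ a b c d : ℂ, a * d - b * c ≠ 0 ∧
      ∀ z ∈ U, h z * (c * y₁ z + d * y₂ z) = a * y₁ z + b * y₂ z := by
  obtain ⟨hv_sol, hhv_sol⟩ := isSolutionOn_of_deriv_mul_sq_eq_one hU hh hv hhv hS
  refine ⟨wronskian (fun z => h z * v z) y₂ z₀, -wronskian (fun z => h z * v z) y₁ z₀,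
    wronskian v y₂ z₀, -wronskian v y₁ z₀, fun h0 => hW ?_, fun z hz => ?_⟩
  · have hdet := wronskian_mul_wronskian_sub (fun z => h z * v z) v y₁ y₂ z₀
    rw [wronskian_mul_left_self (hh z₀ hz₀).differentiableAt (hv z₀ hz₀).differentiableAt,
      hhv z₀ hz₀] at hdet
    linear_combination hdet - h0
  · have e₁ := hy₁.wronskian_mul_eq hU hUc hy₂ hhv_sol hz₀ z hz
    have e₂ := hy₁.wronskian_mul_eq hU hUc hy₂ hv_sol hz₀ z hz
    linear_combination e₁ - h z * e₂

end SquareRootOfDerivative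

theorem eq_moebius_of_ratio_of_solutions_general
    (D : Set ℂ) (hD : IsOpen D) (hDconn : IsConnected D)
    (h g : ℂ → ℂ) (hmer : MeromorphicOn h D) (hnc : NonconstOn h D)
    (hgs : ∀ z ∈ D, AnalyticAt ℂ h z → deriv h z ≠ 0 → schwarzian h z = g z)
    (y₁ y₂ : ℂ → ℂ) (hy₁ : AnalyticOnNhd ℂ y₁ D) (hy₂ : AnalyticOnNhd ℂ y₂ D)
    (hsol₁ : ∀ z ∈ D, deriv (deriv y₁) z + (1 / 2) * g z * y₁ z = 0)
    (hsol₂ : ∀ z ∈ D, deriv (deriv y₂) z + (1 / 2) * g z * y₂ z = 0)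
    (hind : ∀ a b : ℂ, (∀ z ∈ D, a * y₁ z + b * y₂ z = 0) → a = 0 ∧ b = 0) :
    ∃ a b c d : ℂ, a * d - b * c ≠ 0 ∧
      (∀ z ∈ D, AnalyticAt ℂ h z → y₂ z ≠ 0 → c * (y₁ z / y₂ z) + d ≠ 0 →
        h z = (a * (y₁ z / y₂ z) + b) / (c * (y₁ z / y₂ z) + d)) ∧
      (∀ z ∈ D, AnalyticAt ℂ h z → c * y₁ z + d * y₂ z ≠ 0 →
        h z = (a * y₁ z + b * y₂ z) / (c * y₁ z + d * y₂ z)) ∧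
      (∀ z ∈ D, deriv (deriv (fun w => a * y₁ w + b * y₂ w)) z +
        (1 / 2) * g z * (a * y₁ z + b * y₂ z) = 0) ∧
      (∀ z ∈ D, deriv (deriv (fun w => c * y₁ w + d * y₂ w)) z +
        (1 / 2) * g z * (c * y₁ z + d * y₂ z) = 0) := by
  have hDpre := hDconn.isPreconnected
  have hy₁' : IsSolutionOn (fun z => 1 / 2 * g z) D y₁ := ⟨hy₁, hsol₁⟩
  have hy₂' : IsSolutionOn (fun z => 1 / 2 * g z) D y₂ := ⟨hy₂, hsol₂⟩
  obtain ⟨z₀, hz₀, hhz₀, hh'z₀⟩ := hmer.exists_analyticAt_deriv_ne_zero hD hDpre hnc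
  obtain ⟨v, hv⟩ := hhz₀.deriv.exists_eventually_mul_sq_eq_one hh'z₀
  obtain ⟨r, hr, hball⟩ := Metric.eventually_nhds_iff_ball.mp
    (hv.and ((hD.eventually_mem hz₀).and hhz₀.eventually_analyticAt))
  have hBD : ball z₀ r ⊆ D := fun z hz => (hball z hz).2.1
  obtain ⟨a, b, c, d, hdet, hloc⟩ := exists_mul_eq_of_deriv_mul_sq_eq_one isOpen_ball
    (convex_ball z₀ r).isPreconnected (mem_ball_self hr) (fun z hz => (hball z hz).2.2)
    (fun z hz => (hball z hz).1.1) (fun z hz => (hball z hz).1.2)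
    (fun z hz => hgs z (hBD hz) (hball z hz).2.2 (left_ne_zero_of_mul_eq_one (hball z hz).1.2))
    (hy₁'.mono hBD) (hy₂'.mono hBD) (hy₁'.wronskian_ne_zero hD hDpre hy₂' hind hz₀)
  have hmoeb : ∀ z ∈ D, AnalyticAt ℂ h z → c * y₁ z + d * y₂ z ≠ 0 →
      h z = (a * y₁ z + b * y₂ z) / (c * y₁ z + d * y₂ z) := fun z hz hhz hden =>
    hmer.eq_div_of_eventually_mul_eq hDpre (hy₁'.linearCombination hD hy₂' c d).1
      (hy₁'.linearCombination hD hy₂' a b).1 hz₀ (eventually_of_mem (ball_mem_nhds z₀ hr) hloc)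
      hz hhz hden
  refine ⟨a, b, c, d, hdet, fun z hz hhz hy₂z hden => ?_, hmoeb,
    (hy₁'.linearCombination hD hy₂' a b).2, (hy₁'.linearCombination hD hy₂' c d).2⟩
  have hclear : ∀ p q : ℂ, p * y₁ z + q * y₂ z = (p * (y₁ z / y₂ z) + q) * y₂ z := fun p q => by
    field_simp
  rw [hmoeb z hz hhz (by rw [hclear]; exact mul_ne_zero hden hy₂z), hclear, hclear,
    mul_div_mul_right _ _ hy₂z]

/-- Remark after Proposition 2.2. Let `D` be a simply connected
domain, `g` holomorphic on `D`, and `h` a non-constant meromorphic function on `D` with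
`{h, z} = g`. If `y₁, y₂` are two linearly independent holomorphic solutions of
`y'' + (1/2) g y = 0` on `D`, then there is `α = [[a,b],[c,d]] ∈ GL(2,ℂ)` with
`h = (a (y₁/y₂) + b) / (c (y₁/y₂) + d)`; in particular, with
`(f₁, f₂) = (a y₁ + b y₂, c y₁ + d y₂)` one has `h = f₁ / f₂`, and `f₁, f₂` are
holomorphic solutions of `y'' + (1/2) g y = 0`. -/
theorem eq_moebius_of_ratio_of_solutions
    (D : Set ℂ) (hD : IsOpen D) (hDconn : IsConnected D) (hDsc : SimplyConnectedSpace D)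
    (h g : ℂ → ℂ) (hmer : MeromorphicOn h D) (hnc : NonconstOn h D)
    (hg : AnalyticOnNhd ℂ g D)
    (hgs : ∀ z ∈ D, AnalyticAt ℂ h z → deriv h z ≠ 0 → schwarzian h z = g z)
    (y₁ y₂ : ℂ → ℂ) (hy₁ : AnalyticOnNhd ℂ y₁ D) (hy₂ : AnalyticOnNhd ℂ y₂ D)
    (hsol₁ : ∀ z ∈ D, deriv (deriv y₁) z + (1 / 2) * g z * y₁ z = 0)
    (hsol₂ : ∀ z ∈ D, deriv (deriv y₂) z + (1 / 2) * g z * y₂ z = 0)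
    (hind : ∀ a b : ℂ, (∀ z ∈ D, a * y₁ z + b * y₂ z = 0) → a = 0 ∧ b = 0) :
    ∃ a b c d : ℂ, a * d - b * c ≠ 0 ∧
      (∀ z ∈ D, AnalyticAt ℂ h z → y₂ z ≠ 0 → c * (y₁ z / y₂ z) + d ≠ 0 →
        h z = (a * (y₁ z / y₂ z) + b) / (c * (y₁ z / y₂ z) + d)) ∧
      (∀ z ∈ D, AnalyticAt ℂ h z → c * y₁ z + d * y₂ z ≠ 0 →
        h z = (a * y₁ z + b * y₂ z) / (c * y₁ z + d * y₂ z)) ∧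
      (∀ z ∈ D, deriv (deriv (fun w => a * y₁ w + b * y₂ w)) z +
        (1 / 2) * g z * (a * y₁ z + b * y₂ z) = 0) ∧
      (∀ z ∈ D, deriv (deriv (fun w => c * y₁ w + d * y₂ w)) z +
        (1 / 2) * g z * (c * y₁ z + d * y₂ z) = 0) :=
  eq_moebius_of_ratio_of_solutions_general D hD hDconn h g hmer hnc hgs y₁ y₂ hy₁ hy₂ hsol₁ hsol₂
    hind
end
end
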